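/- (Laurent-series value decomposition, Lamond–Puterman.) Let P be an n×n real row-stochastic matrix, r ∈ ℝ^n a reward vector, P* the Cesàro limit of P^m, H = (I − P + P*)⁻¹ (I − P*) the Drazin inverse of I − P, and σ(H) the spectral radius of H. Then for every discount factor γ with σ(H)/(σ(H)+1) < γ < 1, the series ∑_{m=0}^∞ ((γ−1)/γ)^m H^{m+1} r converges and the discounted value function v = (I − γP)⁻¹ r satisfies v = (1/(1−γ)) P* r + (1/γ) ∑_{m=0}^∞ ((γ−1)/γ)^m H^{m+1} r. -/

import Mathlib

open Finset Filter Topology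

/-- A square real matrix is row-stochastic if all entries are nonnegative and
every row sums to 1. -/
def RowStochastic {n : ℕ} (P : Matrix (Fin n) (Fin n) ℝ) : Prop :=
  (∀ i j, 0 ≤ P i j) ∧ ∀ i, ∑ j, P i j = 1

/-- Spectral radius of a real square matrix (largest modulus of its complex
eigenvalues). -/
noncomputable def specRad {n : ℕ} (M : Matrix (Fin n) (Fin n) ℝ) : ℝ :=
  (spectralRadius ℂ (M.map (algebraMap ℝ ℂ))).toReal

/-!
The Cesàro limit `P*` satisfies `P P* = P* P = P* P* = P*`, and it fixes every fixed point of `P`;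
together these make `1 - P + P*` invertible, after which the deviation matrix `H` satisfies
`P* H = 0` and `(1 - P) H = 1 - P*`. With `β = (γ - 1)/γ` the hypothesis on `γ` says exactly
that `σ(βH) = |β| σ(H) < 1`, so by Gelfand's formula the Neumann series `T = ∑ (βH)^m` converges
to an inverse of `1 - βH`, and `S = H T` is the series of the theorem. Writing
`1 - γP = γ((1 - P) - β)`, those identities show that `(1 - γ)⁻¹ P* + γ⁻¹ S` is a right inverse
of `1 - γP`.
-/

section Cesaro

variable {R : Type*} [Ring R] [TopologicalSpace R] [IsTopologicalRing R] [Algebra ℝ R]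

noncomputable def cesaroMean (P : R) (m : ℕ) : R := (m : ℝ)⁻¹ • ∑ k ∈ range m, P ^ k

def IsCesaroLimit (P E : R) : Prop := Tendsto (cesaroMean P) atTop (𝓝 E)

variable {P E X : R}

namespace IsCesaroLimit

theorem tendsto_inv_smul_pow [ContinuousSMul ℝ R] (h : IsCesaroLimit P E) :
    Tendsto (fun m : ℕ => (m : ℝ)⁻¹ • P ^ m) atTop (𝓝 0) := by
  have hdiff : ∀ᶠ m : ℕ in atTop,
      (1 + (m : ℝ)⁻¹) • cesaroMean P (m + 1) - cesaroMean P m = (m : ℝ)⁻¹ • P ^ m := by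
    filter_upwards [eventually_ne_atTop 0] with m hm
    have hcoef : (1 + (m : ℝ)⁻¹) * ((m + 1 : ℕ) : ℝ)⁻¹ = (m : ℝ)⁻¹ := by
      push_cast
      field_simp
    rw [cesaroMean, cesaroMean, sum_range_succ, smul_smul, hcoef, smul_add, add_sub_cancel_left]
  have hlim := (((tendsto_const_nhds (x := (1 : ℝ))).add
    (tendsto_inv_atTop_nhds_zero_nat (𝕜 := ℝ))).smul (h.comp (tendsto_add_atTop_nat 1))).sub h
  rw [add_zero, one_smul, sub_self] at hlim
  exact hlim.congr' hdiff

theorem tendsto_inv_smul_pow_sub_one [ContinuousSMul ℝ R] (h : IsCesaroLimit P E) :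
    Tendsto (fun m : ℕ => (m : ℝ)⁻¹ • (P ^ m - 1)) atTop (𝓝 0) := by
  simpa only [smul_sub, zero_smul, sub_zero] using
    h.tendsto_inv_smul_pow.sub ((tendsto_inv_atTop_nhds_zero_nat (𝕜 := ℝ)).smul_const (1 : R))

theorem mul_limit [ContinuousSMul ℝ R] [T2Space R] (h : IsCesaroLimit P E) : P * E = E := by
  have hlim : Tendsto (fun m : ℕ => (P - 1) * cesaroMean P m) atTop (𝓝 0) := by
    simpa only [cesaroMean, mul_smul_comm, mul_geom_sum] using h.tendsto_inv_smul_pow_sub_one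
  have := tendsto_nhds_unique (tendsto_const_nhds.mul h) hlim
  rwa [sub_mul, one_mul, sub_eq_zero] at this

theorem limit_mul [ContinuousSMul ℝ R] [T2Space R] (h : IsCesaroLimit P E) : E * P = E := by
  have hlim : Tendsto (fun m : ℕ => cesaroMean P m * (P - 1)) atTop (𝓝 0) := by
    simpa only [cesaroMean, smul_mul_assoc, geom_sum_mul] using h.tendsto_inv_smul_pow_sub_one
  have := tendsto_nhds_unique (h.mul tendsto_const_nhds) hlim
  rwa [mul_sub, mul_one, sub_eq_zero] at this

theorem limit_mul_of_mul_eq [T2Space R] (h : IsCesaroLimit P E) (hX : P * X = X) : E * X = X := by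
  have hpow : ∀ k : ℕ, P ^ k * X = X := by
    intro k
    induction k with
    | zero => rw [pow_zero, one_mul]
    | succ k ih => rw [pow_succ, mul_assoc, hX, ih]
  have hmean : (fun m => cesaroMean P m * X) =ᶠ[atTop] fun _ => X := by
    filter_upwards [eventually_ne_atTop 0] with m hm
    rw [cesaroMean, smul_mul_assoc, sum_mul, sum_congr rfl fun k _ => hpow k, sum_const,
      card_range, ← Nat.cast_smul_eq_nsmul ℝ, smul_smul, inv_mul_cancel₀ (Nat.cast_ne_zero.2 hm),
      one_smul]
  exact tendsto_nhds_unique (h.mul tendsto_const_nhds) (tendsto_const_nhds.congr' hmean.symm)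

theorem mul_limit_of_mul_eq [T2Space R] (h : IsCesaroLimit P E) (hX : X * P = X) : X * E = X := by
  have hpow : ∀ k : ℕ, X * P ^ k = X := by
    intro k
    induction k with
    | zero => rw [pow_zero, mul_one]
    | succ k ih => rw [pow_succ, ← mul_assoc, ih, hX]
  have hmean : (fun m => X * cesaroMean P m) =ᶠ[atTop] fun _ => X := by
    filter_upwards [eventually_ne_atTop 0] with m hm
    rw [cesaroMean, mul_smul_comm, mul_sum, sum_congr rfl fun k _ => hpow k, sum_const,
      card_range, ← Nat.cast_smul_eq_nsmul ℝ, smul_smul, inv_mul_cancel₀ (Nat.cast_ne_zero.2 hm),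
      one_smul]
  exact tendsto_nhds_unique (tendsto_const_nhds.mul h) (tendsto_const_nhds.congr' hmean.symm)

theorem limit_mul_self [ContinuousSMul ℝ R] [T2Space R] (h : IsCesaroLimit P E) : E * E = E :=
  h.mul_limit_of_mul_eq h.limit_mul

end IsCesaroLimit

end Cesaro

section FundamentalMatrix

variable {R : Type*} [Ring R] {P E B : R}

theorem mul_one_sub_add_eq_self (hEP : E * P = E) (hEE : E * E = E) : E * (1 - P + E) = E := by
  rw [mul_add, mul_sub, mul_one, hEP, hEE, sub_self, zero_add]

theorem isLeftRegular_one_sub_add (hEP : E * P = E) (hEE : E * E = E)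
    (hfix : ∀ X, P * X = X → E * X = X) : IsLeftRegular (1 - P + E) := by
  refine isLeftRegular_iff_right_eq_zero_of_mul.mpr fun X hX => ?_
  have hEX : E * X = 0 := by rw [← mul_one_sub_add_eq_self hEP hEE, mul_assoc, hX, mul_zero]
  have hPX : P * X = X := by
    rw [add_mul, sub_mul, one_mul, hEX, add_zero, sub_eq_zero] at hX
    exact hX.symm
  rw [← hfix X hPX, hEX]

theorem mul_eq_self_of_one_sub_add_mul_eq_one (hEP : E * P = E) (hEE : E * E = E)
    (hB : (1 - P + E) * B = 1) : E * B = E :=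
  calc E * B = E * (1 - P + E) * B := by rw [mul_one_sub_add_eq_self hEP hEE]
    _ = E := by rw [mul_assoc, hB, mul_one]

theorem mul_drazin_eq_zero (hEP : E * P = E) (hEE : E * E = E) (hB : (1 - P + E) * B = 1) :
    E * (B * (1 - E)) = 0 := by
  rw [← mul_assoc, mul_eq_self_of_one_sub_add_mul_eq_one hEP hEE hB, mul_sub, mul_one, hEE,
    sub_self]

theorem one_sub_mul_drazin (hEP : E * P = E) (hEE : E * E = E) (hB : (1 - P + E) * B = 1) :
    (1 - P) * (B * (1 - E)) = 1 - E := by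
  have hAB : (1 - P) * B = 1 - E := by
    rw [show 1 - P = (1 - P + E) - E by abel, sub_mul, hB,
      mul_eq_self_of_one_sub_add_mul_eq_one hEP hEE hB]
  rw [← mul_assoc, hAB, sub_mul, one_mul, mul_sub, mul_one, hEE, sub_self, sub_zero]

end FundamentalMatrix

section Resolvent

variable {k R : Type*} [Field k] [Ring R] [Algebra k R] {P E H T : R} {γ : k}

theorem one_sub_smul_mul_laurent_eq_one (hγ0 : γ ≠ 0) (hγ1 : γ ≠ 1) (hPE : P * E = E)
    (hEH : E * H = 0) (hPH : (1 - P) * H = 1 - E) (hT : (1 - ((γ - 1) / γ) • H) * T = 1) :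
    (1 - γ • P) * ((1 - γ)⁻¹ • E + γ⁻¹ • (H * T)) = 1 := by
  set β := (γ - 1) / γ with hβ
  have hTS : T = 1 + β • (H * T) := by
    rwa [sub_mul, one_mul, smul_mul_assoc, sub_eq_iff_eq_add] at hT
  set S := H * T
  have hET : E * T = E := by
    rw [hTS, mul_add, mul_one, mul_smul_comm, ← mul_assoc, hEH, zero_mul, smul_zero, add_zero]
  have hPS : P * S = S - (1 - E) - β • S := by
    have h : S - P * S = T - E := by rw [← one_sub_mul, ← mul_assoc, hPH, sub_mul, one_mul, hET]
    calc P * S = S - (S - P * S) := by abel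
      _ = S - (1 - E) - β • S := by rw [h, hTS]; abel
  rw [mul_add, mul_smul_comm, mul_smul_comm, sub_mul, sub_mul, one_mul, one_mul, smul_mul_assoc,
    smul_mul_assoc, hPE, hPS]
  have hγ1' : 1 - γ ≠ 0 := sub_ne_zero.mpr hγ1.symm
  clear_value β
  subst hβ
  match_scalars <;> field_simp <;> ring

end Resolvent

theorem one_sub_mul_eq_one_of_hasSum_pow {R : Type*} [Ring R] [TopologicalSpace R]
    [IsTopologicalRing R] [T2Space R] {x T : R} (h : HasSum (x ^ ·) T) : (1 - x) * T = 1 := by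
  have hshift : HasSum (fun m => x ^ (m + 1)) (T - 1) := by
    simpa using (hasSum_nat_add_iff' 1).mpr h
  have hmul : HasSum (fun m => x ^ (m + 1)) (x * T) := by
    simpa only [pow_succ'] using h.mul_left x
  rw [sub_mul, one_mul, hmul.unique hshift, sub_sub_cancel]

namespace spectrum

open scoped Pointwise

theorem spectralRadius_smul {𝕜 A : Type*} [NormedField 𝕜] [Ring A] [Algebra 𝕜 A] (c : 𝕜)
    (a : A) : spectralRadius 𝕜 (c • a) = ‖c‖₊ * spectralRadius 𝕜 a := by
  rcases eq_or_ne c 0 with rfl | hc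
  · simp [spectralRadius_zero]
  rw [spectralRadius, spectralRadius, ← Units.smul_mk0 hc, unit_smul_eq_smul, Units.smul_def,
    Units.val_mk0, ← Set.image_smul, iSup_image]
  simp only [smul_eq_mul, nnnorm_mul, ENNReal.coe_mul, ENNReal.mul_iSup]

theorem spectralRadius_ne_top {𝕜 A : Type*} [NormedField 𝕜] [NormedRing A] [NormedAlgebra 𝕜 A]
    [CompleteSpace A] (a : A) : spectralRadius 𝕜 a ≠ ⊤ :=
  ((spectralRadius_le_pow_nnnorm_pow_one_div 𝕜 a 0).trans_lt (by simp [ENNReal.mul_lt_top])).ne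

theorem summable_pow_of_spectralRadius_lt_one {A : Type*} [NormedRing A] [NormedAlgebra ℂ A]
    [CompleteSpace A] {a : A} (h : spectralRadius ℂ a < 1) : Summable (a ^ ·) := by
  obtain ⟨ρ, hρa, hρ1⟩ := ENNReal.lt_iff_exists_nnreal_btwn.mp h
  have hbound : ∀ᶠ m : ℕ in atTop, ‖a ^ m‖ ≤ ρ ^ m := by
    filter_upwards [(pow_norm_pow_one_div_tendsto_nhds_spectralRadius a).eventually_lt_const hρa,
      eventually_gt_atTop 0] with m hm hm0
    rw [← ENNReal.ofReal_coe_nnreal, ENNReal.ofReal_lt_ofReal_iff', one_div] at hm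
    have := (Real.rpow_inv_lt_iff_of_pos (norm_nonneg _) ρ.2 (Nat.cast_pos.2 hm0)).mp hm.1
    exact_mod_cast this.le
  refine .of_norm_bounded_eventually (summable_geometric_of_lt_one ρ.2 (by exact_mod_cast hρ1)) ?_
  rwa [Nat.cofinite_eq_atTop]

end spectrum

/- Neither the spectral radius nor the topology depends on a choice of norm; the ℓ∞ operator norm
only supplies the Banach algebra structure that Gelfand's formula needs. -/
namespace Matrix

variable {ι : Type*} [Fintype ι] [DecidableEq ι]

theorem spectralRadius_ne_top (A : Matrix ι ι ℂ) : spectralRadius ℂ A ≠ ⊤ :=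
  letI := Matrix.linftyOpNormedRing (n := ι) (α := ℂ)
  letI := Matrix.linftyOpNormedAlgebra (n := ι) (R := ℂ) (α := ℂ)
  spectrum.spectralRadius_ne_top A

theorem summable_pow_of_spectralRadius_lt_one {A : Matrix ι ι ℂ} (h : spectralRadius ℂ A < 1) :
    Summable (A ^ ·) :=
  letI := Matrix.linftyOpNormedRing (n := ι) (α := ℂ)
  letI := Matrix.linftyOpNormedAlgebra (n := ι) (R := ℂ) (α := ℂ)
  spectrum.summable_pow_of_spectralRadius_lt_one h

end Matrix

theorem specRad_nonneg {n : ℕ} (M : Matrix (Fin n) (Fin n) ℝ) : 0 ≤ specRad M :=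
  ENNReal.toReal_nonneg

theorem specRad_smul {n : ℕ} (c : ℝ) (M : Matrix (Fin n) (Fin n) ℝ) :
    specRad (c • M) = |c| * specRad M := by
  rw [specRad, specRad, Matrix.map_smul' _ c M (map_mul _), spectrum.spectralRadius_smul,
    ENNReal.toReal_mul]
  simp

theorem summable_pow_of_specRad_lt_one {n : ℕ} {M : Matrix (Fin n) (Fin n) ℝ}
    (h : specRad M < 1) : Summable (M ^ ·) := by
  rw [specRad, ← ENNReal.toReal_one,
    ENNReal.toReal_lt_toReal (Matrix.spectralRadius_ne_top _) ENNReal.one_ne_top] at h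
  have hre : ∀ m : ℕ, ((M.map (algebraMap ℝ ℂ)) ^ m).map Complex.re = M ^ m := fun m => by
    ext i j
    rw [← Matrix.map_pow]
    exact Complex.ofReal_re _
  simpa only [Function.comp_def, AddMonoidHom.mapMatrix_apply, Complex.coe_reAddGroupHom, hre]
    using (Matrix.summable_pow_of_spectralRadius_lt_one h).map Complex.reAddGroupHom.mapMatrix
      (continuous_id.matrix_map Complex.continuous_re)

theorem specRad_smul_lt_one {n : ℕ} {M : Matrix (Fin n) (Fin n) ℝ} {γ : ℝ} (hγ0 : 0 < γ)
    (hlo : specRad M / (specRad M + 1) < γ) (hhi : γ < 1) : specRad (((γ - 1) / γ) • M) < 1 := by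
  rw [specRad_smul, abs_of_nonpos (div_nonpos_of_nonpos_of_nonneg (by linarith) hγ0.le),
    ← neg_div, neg_sub, div_mul_eq_mul_div, div_lt_one hγ0]
  rw [div_lt_iff₀ (by linarith [specRad_nonneg M])] at hlo
  linarith

theorem HasSum.tendsto_sum_mulVec {ι α : Type*} [Fintype ι] [NonUnitalNonAssocSemiring α]
    [TopologicalSpace α] [IsTopologicalSemiring α] {f : ℕ → Matrix ι ι α} {S : Matrix ι ι α}
    (h : HasSum f S) (r : ι → α) :
    Tendsto (fun M => ∑ m ∈ range M, (f m).mulVec r) atTop (𝓝 (S.mulVec r)) := by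
  simpa only [Function.comp_def, id, Matrix.sum_mulVec] using
    ((continuous_id.matrix_mulVec (continuous_const (y := r))).tendsto S).comp h.tendsto_sum_nat

theorem laurent_value_decomposition_general {n : ℕ} (P : Matrix (Fin n) (Fin n) ℝ)
    (r : Fin n → ℝ) (Pstar : Matrix (Fin n) (Fin n) ℝ)
    (hPstar : Tendsto (fun m : ℕ => (m : ℝ)⁻¹ • ∑ k ∈ Finset.range m, P ^ k)
      atTop (𝓝 Pstar))
    (H : Matrix (Fin n) (Fin n) ℝ)
    (hH : H = (1 - P + Pstar)⁻¹ * (1 - Pstar))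
    (γ : ℝ) (hγlo : specRad H / (specRad H + 1) < γ) (hγhi : γ < 1) :
    ∃ s : Fin n → ℝ,
      Tendsto (fun M : ℕ => ∑ m ∈ Finset.range M, ((γ - 1) / γ) ^ m • (H ^ (m + 1)).mulVec r)
        atTop (𝓝 s) ∧
      (1 - γ • P)⁻¹.mulVec r = (1 - γ)⁻¹ • Pstar.mulVec r + γ⁻¹ • s := by
  have hE : IsCesaroLimit P Pstar := hPstar
  have hEP := hE.limit_mul
  have hEE := hE.limit_mul_self
  have hdet : IsUnit (1 - P + Pstar).det := isUnit_iff_ne_zero.mpr <|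
    Matrix.nonsingular_iff_det_ne_zero.mp <| .of_leftRegular <|
      isLeftRegular_one_sub_add hEP hEE fun _ => hE.limit_mul_of_mul_eq
  have hB := Matrix.mul_nonsing_inv _ hdet
  have hγ0 : 0 < γ := (div_nonneg (specRad_nonneg H) (by linarith [specRad_nonneg H])).trans_lt hγlo
  set β := (γ - 1) / γ
  obtain ⟨T, hT⟩ := summable_pow_of_specRad_lt_one (specRad_smul_lt_one (M := H) hγ0 hγlo hγhi)
  have hS : HasSum (fun m => β ^ m • H ^ (m + 1)) (H * T) := by
    simpa only [smul_pow, mul_smul_comm, ← pow_succ'] using hT.mul_left H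
  have hinv : (1 - γ • P)⁻¹ = (1 - γ)⁻¹ • Pstar + γ⁻¹ • (H * T) :=
    Matrix.inv_eq_right_inv <| one_sub_smul_mul_laurent_eq_one hγ0.ne' hγhi.ne hE.mul_limit
      (hH ▸ mul_drazin_eq_zero hEP hEE hB) (hH ▸ one_sub_mul_drazin hEP hEE hB)
      (one_sub_mul_eq_one_of_hasSum_pow hT)
  refine ⟨(H * T).mulVec r, by simpa only [Matrix.smul_mulVec] using hS.tendsto_sum_mulVec r, ?_⟩
  rw [hinv, Matrix.add_mulVec, Matrix.smul_mulVec, Matrix.smul_mulVec]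

/-- Laurent-series value decomposition, Lamond–Puterman: for
`σ(H)/(σ(H)+1) < γ < 1`, the series `∑_m ((γ-1)/γ)^m H^{m+1} r` converges, and the
discounted value function `v = (I - γP)⁻¹ r` decomposes as
`v = (1/(1-γ)) P* r + (1/γ) ∑_m ((γ-1)/γ)^m H^{m+1} r`. -/
theorem laurent_value_decomposition {n : ℕ} (P : Matrix (Fin n) (Fin n) ℝ)
    (hP : RowStochastic P) (r : Fin n → ℝ) (Pstar : Matrix (Fin n) (Fin n) ℝ)
    (hPstar : Tendsto (fun m : ℕ => (m : ℝ)⁻¹ • ∑ k ∈ Finset.range m, P ^ k)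
      atTop (𝓝 Pstar))
    (H : Matrix (Fin n) (Fin n) ℝ)
    (hH : H = (1 - P + Pstar)⁻¹ * (1 - Pstar))
    (γ : ℝ) (hγlo : specRad H / (specRad H + 1) < γ) (hγhi : γ < 1) :
    ∃ s : Fin n → ℝ,
      Tendsto (fun M : ℕ => ∑ m ∈ Finset.range M, ((γ - 1) / γ) ^ m • (H ^ (m + 1)).mulVec r)
        atTop (𝓝 s) ∧
      (1 - γ • P)⁻¹.mulVec r = (1 - γ)⁻¹ • Pstar.mulVec r + γ⁻¹ • s :=
  laurent_value_decomposition_general P r Pstar hPstar H hH γ hγlo hγhi
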